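/- Let (P_n) be the renewal covering of the natural numbers. For every ε > 0 and every integer N > 0, P(P_n > (1+ε) n ln n for all n > N) = 0 and P(P_n < (1−ε) n ln n for all n > N) = 0. -/

import Mathlib

open MeasureTheory ProbabilityTheory Filter

/-- The renewal covering of the natural numbers: a random increasing sequence `P` with
`P 1 = 2` almost surely, and such that, conditionally on the values
`P 1 = a 1, ..., P n = a n`, the increment `P (n+1) − P n` is distributed as a geometric
random variable with parameter `λ_n = ∏_{k=1}^n (1 − 1/a k)`, independently of the past. -/
structure RenewalCovering {Ω : Type*} [MeasurableSpace Ω] (μ : Measure Ω) where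
  P : ℕ → Ω → ℕ
  meas : ∀ n, Measurable (P n)
  incr : ∀ᵐ ω ∂μ, ∀ n, 1 ≤ n → P n ω < P (n + 1) ω
  init : ∀ᵐ ω ∂μ, P 1 ω = 2
  cond : ∀ n : ℕ, 1 ≤ n → ∀ a : ℕ → ℕ,
    (∀ i, 1 ≤ i → i < n → a i < a (i + 1)) → a 1 = 2 →
    ∀ j : ℕ, 1 ≤ j →
    μ {ω | P (n + 1) ω = a n + j ∧ ∀ i, 1 ≤ i → i ≤ n → P i ω = a i}
      = ENNReal.ofReal
          ((1 - ∏ k ∈ Finset.Icc 1 n, (1 - 1 / (a k : ℝ))) ^ (j - 1)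
            * ∏ k ∈ Finset.Icc 1 n, (1 - 1 / (a k : ℝ)))
        * μ {ω | ∀ i, 1 ≤ i → i ≤ n → P i ω = a i}

/-- The random parameter `λ_n = ∏_{k=1}^n (1 − 1/P_k)`. -/
noncomputable def RenewalCovering.lam {Ω : Type*} [MeasurableSpace Ω] {μ : Measure Ω}
    (R : RenewalCovering μ) (n : ℕ) (ω : Ω) : ℝ :=
  ∏ k ∈ Finset.Icc 1 n, (1 - 1 / (R.P k ω : ℝ))

namespace RC17

open Topology

variable {Ω : Type*} [MeasurableSpace Ω] {μ : Measure Ω}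

/-- The a.s. good set: `P 1 = 2` and strict increase. -/
def Og (R : RenewalCovering μ) : Set Ω :=
  {ω | R.P 1 ω = 2} ∩ ⋂ n : ℕ, {ω | R.P (n + 1) ω < R.P (n + 2) ω}

lemma mem_Og_iff {R : RenewalCovering μ} {ω : Ω} :
    ω ∈ Og R ↔ R.P 1 ω = 2 ∧ ∀ n, 1 ≤ n → R.P n ω < R.P (n + 1) ω := by
  constructor
  · rintro ⟨h1, h2⟩
    refine ⟨h1, fun n hn => ?_⟩
    obtain ⟨m, rfl⟩ := Nat.exists_eq_add_of_le' hn
    simpa using Set.mem_iInter.1 h2 m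
  · rintro ⟨h1, h2⟩
    exact ⟨h1, Set.mem_iInter.2 fun n => h2 (n + 1) (Nat.succ_le_succ n.zero_le)⟩

lemma meas_Og (R : RenewalCovering μ) : MeasurableSet (Og R) := by
  refine MeasurableSet.inter ((R.meas 1) (measurableSet_singleton 2)) ?_
  exact MeasurableSet.iInter fun n => measurableSet_lt (R.meas (n + 1)) (R.meas (n + 2))

lemma compl_Og_null (R : RenewalCovering μ) : μ (Og R)ᶜ = 0 := by
  have h : ∀ᵐ ω ∂μ, ω ∈ Og R := by
    filter_upwards [R.init, R.incr] with ω h1 h2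
    exact mem_Og_iff.2 ⟨h1, h2⟩
  exact ae_iff.1 h

/-- Admissible trajectory prefixes of length `M`. -/
def S (M : ℕ) : Set (ℕ → ℕ) :=
  {a | a 1 = 2 ∧ (∀ i, 1 ≤ i → i < M → a i < a (i + 1)) ∧ ∀ i, ¬(1 ≤ i ∧ i ≤ M) → a i = 0}

lemma countable_S (M : ℕ) : (S M).Countable := by
  have hsub : S M ⊆ Set.range (fun (c : Fin (M + 1) → ℕ) (i : ℕ) =>
      if h : i < M + 1 then c ⟨i, h⟩ else 0) := by
    intro a ha
    refine ⟨fun i => a i, funext fun i => ?_⟩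
    by_cases h : i < M + 1
    · simp [h]
    · simp only [dif_neg h]
      exact (ha.2.2 i (by omega)).symm
  exact (Set.countable_range _).mono hsub

lemma S_ge {M : ℕ} {a : ℕ → ℕ} (ha : a ∈ S M) :
    ∀ k, 1 ≤ k → k ≤ M → k + 1 ≤ a k := by
  intro k hk1 hkM
  induction k with
  | zero => omega
  | succ n ih =>
    rcases Nat.eq_or_lt_of_le hk1 with h | h
    · simp only [← h, ha.1]; omega
    · have hn : 1 ≤ n := by omega
      have := ih hn (by omega)
      have := ha.2.1 n hn (by omega)
      omega

/-- Deterministic lambda of a trajectory. -/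
noncomputable def lamA (M : ℕ) (a : ℕ → ℕ) : ℝ :=
  ∏ k ∈ Finset.Icc 1 M, (1 - 1 / (a k : ℝ))

lemma lamA_factor_mem {M : ℕ} {a : ℕ → ℕ} (ha : a ∈ S M) {k : ℕ} (hk : k ∈ Finset.Icc 1 M) :
    (1:ℝ)/2 ≤ 1 - 1 / (a k : ℝ) ∧ 1 - 1 / (a k : ℝ) < 1 := by
  simp only [Finset.mem_Icc] at hk
  have h2 : 2 ≤ a k := by have := S_ge ha k hk.1 hk.2; omega
  have h2' : (2:ℝ) ≤ (a k : ℝ) := by exact_mod_cast h2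
  have hpos : (0:ℝ) < (a k : ℝ) := by linarith
  constructor
  · have : 1 / (a k : ℝ) ≤ 1 / 2 := by
      apply one_div_le_one_div_of_le <;> linarith
    linarith
  · have : 0 < 1 / (a k : ℝ) := by positivity
    linarith

lemma lamA_pos {M : ℕ} {a : ℕ → ℕ} (ha : a ∈ S M) : 0 < lamA M a :=
  Finset.prod_pos fun k hk => lt_of_lt_of_le (by norm_num) (lamA_factor_mem ha hk).1

lemma lamA_le_one {M : ℕ} {a : ℕ → ℕ} (ha : a ∈ S M) : lamA M a ≤ 1 :=
  Finset.prod_le_one (fun k hk => le_trans (by norm_num) (lamA_factor_mem ha hk).1)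
    (fun k hk => le_of_lt (lamA_factor_mem ha hk).2)

/-- The atom determined by trajectory `a` up to time `M`. -/
def V (R : RenewalCovering μ) (M : ℕ) (a : ℕ → ℕ) : Set Ω :=
  {ω | ∀ i, 1 ≤ i → i ≤ M → R.P i ω = a i}

lemma meas_V (R : RenewalCovering μ) (M : ℕ) (a : ℕ → ℕ) : MeasurableSet (V R M a) := by
  have : V R M a = ⋂ (i : ℕ) (_ : 1 ≤ i) (_ : i ≤ M), R.P i ⁻¹' {a i} := by
    ext ω; simp [V, Set.mem_iInter]
  rw [this]
  exact MeasurableSet.iInter fun i => MeasurableSet.iInter fun _ =>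
    MeasurableSet.iInter fun _ => (R.meas i) (measurableSet_singleton _)

/-- Truncation of a function to `[1, M]`. -/
def trunc (M : ℕ) (f : ℕ → ℕ) : ℕ → ℕ := fun i => if 1 ≤ i ∧ i ≤ M then f i else 0

lemma trunc_mem_S {R : RenewalCovering μ} {ω : Ω} (hω : ω ∈ Og R) {M : ℕ} (hM : 1 ≤ M) :
    trunc M (fun i => R.P i ω) ∈ S M := by
  obtain ⟨h1, h2⟩ := mem_Og_iff.1 hω
  refine ⟨?_, fun i hi1 hiM => ?_, fun i hi => by simp [trunc, hi]⟩
  · simp [trunc, hM, h1]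
  · have e1 : trunc M (fun i => R.P i ω) i = R.P i ω := by simp [trunc, hi1, le_of_lt hiM]
    have e2 : trunc M (fun i => R.P i ω) (i+1) = R.P (i+1) ω := by
      simp [trunc]; omega
    rw [e1, e2]; exact h2 i hi1

lemma mem_V_trunc {R : RenewalCovering μ} (ω : Ω) (M : ℕ) :
    ω ∈ V R M (trunc M (fun i => R.P i ω)) := by
  intro i hi1 hiM; simp [trunc, hi1, hiM]

lemma S_eq_of_mem_V {R : RenewalCovering μ} {M : ℕ} {a b : ℕ → ℕ}
    (ha : a ∈ S M) (hb : b ∈ S M) {ω : Ω} (hωa : ω ∈ V R M a) (hωb : ω ∈ V R M b) :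
    a = b := by
  funext i
  by_cases h : 1 ≤ i ∧ i ≤ M
  · rw [← hωa i h.1 h.2, ← hωb i h.1 h.2]
  · rw [ha.2.2 i h, hb.2.2 i h]

/-- The union of good atoms satisfying predicate `q`. -/
def U (R : RenewalCovering μ) (M : ℕ) (q : (ℕ → ℕ) → Prop) : Set Ω :=
  ⋃ a : ↥(S M ∩ {a | q a}), (V R M a ∩ Og R)

instance (M : ℕ) (q : (ℕ → ℕ) → Prop) : Countable ↥(S M ∩ {a | q a}) :=
  ((countable_S M).mono Set.inter_subset_left).to_subtype

lemma meas_atom (R : RenewalCovering μ) (M : ℕ) (a : ℕ → ℕ) :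
    MeasurableSet (V R M a ∩ Og R) := (meas_V R M a).inter (meas_Og R)

lemma disjoint_atoms (R : RenewalCovering μ) (M : ℕ) (q : (ℕ → ℕ) → Prop) :
    Pairwise (Function.onFun Disjoint fun a : ↥(S M ∩ {a | q a}) => V R M a ∩ Og R) := by
  intro a b hab
  rw [Function.onFun, Set.disjoint_left]
  rintro ω ⟨hVa, _⟩ ⟨hVb, _⟩
  exact hab (Subtype.ext (S_eq_of_mem_V a.2.1 b.2.1 hVa hVb))

lemma meas_U (R : RenewalCovering μ) (M : ℕ) (q : (ℕ → ℕ) → Prop) :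
    MeasurableSet (U R M q) :=
  MeasurableSet.iUnion fun a => meas_atom R M a

lemma inter_Og_eq_U (R : RenewalCovering μ) {M : ℕ} (hM : 1 ≤ M) (q : (ℕ → ℕ) → Prop)
    (hq : ∀ a b : ℕ → ℕ, (∀ i, 1 ≤ i → i ≤ M → a i = b i) → q a → q b) :
    {ω | q (fun i => R.P i ω)} ∩ Og R = U R M q := by
  ext ω
  constructor
  · rintro ⟨hqω, hΩ⟩
    have haS := trunc_mem_S hΩ hM
    have haq : q (trunc M (fun i => R.P i ω)) :=
      hq _ _ (fun i hi1 hiM => by simp [trunc, hi1, hiM]) hqω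
    exact Set.mem_iUnion.2 ⟨⟨_, haS, haq⟩, mem_V_trunc ω M, hΩ⟩
  · intro hω
    obtain ⟨⟨a, haS, haq⟩, hVa, hΩ⟩ := Set.mem_iUnion.1 hω
    refine ⟨hq a _ (fun i hi1 hiM => (hVa i hi1 hiM).symm) haq, hΩ⟩

lemma lintegral_U (R : RenewalCovering μ) (M : ℕ) (q : (ℕ → ℕ) → Prop) (f : Ω → ENNReal) :
    ∫⁻ ω in U R M q, f ω ∂μ
      = ∑' a : ↥(S M ∩ {a | q a}), ∫⁻ ω in V R M a ∩ Og R, f ω ∂μ :=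
  lintegral_iUnion (s := fun a : ↥(S M ∩ {a | q a}) => V R M ↑a ∩ Og R)
    (fun a => meas_atom R M a) (disjoint_atoms R M q) f

lemma measure_U (R : RenewalCovering μ) (M : ℕ) (q : (ℕ → ℕ) → Prop) :
    μ (U R M q) = ∑' a : ↥(S M ∩ {a | q a}), μ (V R M a ∩ Og R) :=
  measure_iUnion (f := fun a : ↥(S M ∩ {a | q a}) => V R M ↑a ∩ Og R)
    (disjoint_atoms R M q) (fun a => meas_atom R M a)

/-- Measure of the one-step extension of an atom, from `cond`. -/
lemma atom_measure (R : RenewalCovering μ) {M : ℕ} (hM : 1 ≤ M) {a : ℕ → ℕ} (ha : a ∈ S M)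
    (j : ℕ) :
    μ (V R M a ∩ {ω | R.P (M + 1) ω = a M + (j + 1)})
      = ENNReal.ofReal ((1 - lamA M a) ^ j * lamA M a) * μ (V R M a) := by
  have h := R.cond M hM a ha.2.1 ha.1 (j + 1) (Nat.succ_le_succ j.zero_le)
  have hset : {ω | R.P (M + 1) ω = a M + (j + 1) ∧ ∀ i, 1 ≤ i → i ≤ M → R.P i ω = a i}
      = V R M a ∩ {ω | R.P (M + 1) ω = a M + (j + 1)} := by
    ext ω; exact and_comm
  have hset2 : {ω | ∀ i, 1 ≤ i → i ≤ M → R.P i ω = a i} = V R M a := rfl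
  rw [hset, hset2] at h
  simpa [lamA] using h

/-- Integral of a function of `P (M+1)` over a good atom. -/
lemma atom_lintegral (R : RenewalCovering μ) {M : ℕ} (hM : 1 ≤ M) {a : ℕ → ℕ} (ha : a ∈ S M)
    (g : ℕ → ENNReal) :
    ∫⁻ ω in V R M a ∩ Og R, g (R.P (M + 1) ω) ∂μ
      = ∑' j : ℕ, g (a M + (j + 1))
          * (ENNReal.ofReal ((1 - lamA M a) ^ j * lamA M a) * μ (V R M a)) := by
  set D : ℕ → Set Ω := fun j => (V R M a ∩ Og R) ∩ {ω | R.P (M + 1) ω = a M + (j + 1)}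
    with hD
  have hmeasD : ∀ j, MeasurableSet (D j) :=
    fun j => (meas_atom R M a).inter ((R.meas (M + 1)) (measurableSet_singleton _))
  have hdisj : Pairwise (Function.onFun Disjoint D) := by
    intro i j hij
    rw [Function.onFun, Set.disjoint_left]
    rintro ω ⟨_, h1⟩ ⟨_, h2⟩
    simp only [Set.mem_setOf_eq] at h1 h2
    exact hij (by omega : i = j)
  have hUnion : V R M a ∩ Og R = ⋃ j, D j := by
    ext ω
    constructor
    · rintro ⟨hV, hΩ⟩
      have h1 : R.P M ω = a M := hV M hM le_rfl
      have h2 : R.P M ω < R.P (M + 1) ω := (mem_Og_iff.1 hΩ).2 M hM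
      refine Set.mem_iUnion.2 ⟨R.P (M + 1) ω - a M - 1, ⟨hV, hΩ⟩, ?_⟩
      simp only [Set.mem_setOf_eq]; omega
    · rintro ⟨_, ⟨j, rfl⟩, hω⟩; exact hω.1
  rw [hUnion, lintegral_iUnion hmeasD hdisj]
  congr 1
  funext j
  have hconst : ∫⁻ ω in D j, g (R.P (M + 1) ω) ∂μ = ∫⁻ _ in D j, g (a M + (j + 1)) ∂μ := by
    apply setLIntegral_congr_fun (hmeasD j)
    exact fun ω hω => by rw [hω.2]
  rw [hconst, setLIntegral_const]
  have hDj : μ (D j) = ENNReal.ofReal ((1 - lamA M a) ^ j * lamA M a) * μ (V R M a) := by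
    have : D j = (V R M a ∩ {ω | R.P (M + 1) ω = a M + (j + 1)}) ∩ Og R := by
      rw [hD]; ext ω
      simp only [Set.mem_inter_iff, Set.mem_setOf_eq]; tauto
    rw [this, measure_inter_conull (compl_Og_null R)]
    exact atom_measure R hM ha j
  rw [hDj]

/-- Integral of a function of `P M` over a good atom. -/
lemma atom_lintegral_now (R : RenewalCovering μ) {M : ℕ} (hM : 1 ≤ M) {a : ℕ → ℕ}
    (g : ℕ → ENNReal) :
    ∫⁻ ω in V R M a ∩ Og R, g (R.P M ω) ∂μ = g (a M) * μ (V R M a ∩ Og R) := by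
  have hconst : ∫⁻ ω in V R M a ∩ Og R, g (R.P M ω) ∂μ
      = ∫⁻ _ in V R M a ∩ Og R, g (a M) ∂μ := by
    apply setLIntegral_congr_fun (meas_atom R M a)
    exact fun ω hω => by rw [hω.1 M hM le_rfl]
  rw [hconst, setLIntegral_const]

/-- Real geometric mean identity. -/
lemma geom_tsum_mean {lam : ℝ} (h0 : 0 < lam) (h1 : lam ≤ 1) (A : ℝ) :
    ∑' j : ℕ, (A + (j + 1)) * ((1 - lam) ^ j * lam) = A + 1 / lam := by
  set x := 1 - lam with hx
  have hx0 : 0 ≤ x := by simp [hx]; linarith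
  have hx1 : x < 1 := by simp [hx]; linarith
  have hxn : ‖x‖ < 1 := by rw [Real.norm_eq_abs, abs_of_nonneg hx0]; exact hx1
  have hsum1 : Summable (fun j : ℕ => (A + 1) * x ^ j * lam) := by
    exact ((summable_geometric_of_lt_one hx0 hx1).mul_left _).mul_right _
  have hsum2 : Summable (fun j : ℕ => (j : ℝ) * x ^ j * lam) := by
    have := summable_pow_mul_geometric_of_norm_lt_one 1 hxn
    simpa using this.mul_right lam
  have hsplit : ∀ j : ℕ, (A + (j + 1)) * (x ^ j * lam)
      = (A + 1) * x ^ j * lam + (j : ℝ) * x ^ j * lam := by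
    intro j; ring
  rw [tsum_congr hsplit, Summable.tsum_add hsum1 hsum2]
  have e1 : ∑' j : ℕ, (A + 1) * x ^ j * lam = (A + 1) * (1 - x)⁻¹ * lam := by
    rw [tsum_mul_right, tsum_mul_left, tsum_geometric_of_lt_one hx0 hx1]
  have e2 : ∑' j : ℕ, (j : ℝ) * x ^ j * lam = (x / (1 - x) ^ 2) * lam := by
    rw [tsum_mul_right, tsum_coe_mul_geometric_of_norm_lt_one hxn]
  rw [e1, e2]
  have hlam : 1 - x = lam := by simp [hx]
  rw [hlam]
  field_simp
  ring

lemma geom_summable {lam : ℝ} (h0 : 0 < lam) (h1 : lam ≤ 1) (A : ℝ) :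
    Summable (fun j : ℕ => (A + (j + 1)) * ((1 - lam) ^ j * lam)) := by
  set x := 1 - lam with hx
  have hx0 : 0 ≤ x := by simp [hx]; linarith
  have hx1 : x < 1 := by simp [hx]; linarith
  have hxn : ‖x‖ < 1 := by rw [Real.norm_eq_abs, abs_of_nonneg hx0]; exact hx1
  have hsum1 : Summable (fun j : ℕ => (A + 1) * x ^ j * lam) :=
    ((summable_geometric_of_lt_one hx0 hx1).mul_left _).mul_right _
  have hsum2 : Summable (fun j : ℕ => (j : ℝ) * x ^ j * lam) := by
    have := summable_pow_mul_geometric_of_norm_lt_one 1 hxn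
    simpa using this.mul_right lam
  have := hsum1.add hsum2
  apply this.congr
  intro j; ring

lemma measure_atom_eq (R : RenewalCovering μ) (M : ℕ) (a : ℕ → ℕ) :
    μ (V R M a ∩ Og R) = μ (V R M a) := measure_inter_conull (compl_Og_null R)

/-- Mean of `P (M+1)` over a good atom. -/
lemma atom_mean (R : RenewalCovering μ) {M : ℕ} (hM : 1 ≤ M) {a : ℕ → ℕ} (ha : a ∈ S M) :
    ∫⁻ ω in V R M a ∩ Og R, (R.P (M + 1) ω : ENNReal) ∂μ
      = ENNReal.ofReal ((a M : ℝ) + 1 / lamA M a) * μ (V R M a) := by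
  rw [atom_lintegral R hM ha (fun m => (m : ENNReal))]
  have h0 := lamA_pos ha
  have h1 := lamA_le_one ha
  have hterm : ∀ j : ℕ, ((a M + (j + 1) : ℕ) : ENNReal)
      * (ENNReal.ofReal ((1 - lamA M a) ^ j * lamA M a) * μ (V R M a))
      = ENNReal.ofReal (((a M : ℝ) + (j + 1)) * ((1 - lamA M a) ^ j * lamA M a))
          * μ (V R M a) := by
    intro j
    rw [← mul_assoc, ← ENNReal.ofReal_natCast (a M + (j + 1)), ← ENNReal.ofReal_mul (by positivity)]
    push_cast
    ring_nf
  rw [tsum_congr hterm, ENNReal.tsum_mul_right,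
    ← ENNReal.ofReal_tsum_of_nonneg
      (fun j => mul_nonneg (by positivity)
        (mul_nonneg (pow_nonneg (by linarith) j) h0.le))
      (geom_summable h0 h1 (a M : ℝ)),
    geom_tsum_mean h0 h1]

/-- One-step mean bound over a union of good atoms. -/
lemma step_mean (R : RenewalCovering μ) {M : ℕ} (hM : 1 ≤ M) (q : (ℕ → ℕ) → Prop)
    {Λ : ℝ} (hΛ0 : 0 < Λ) (hΛ : ∀ a ∈ S M, q a → Λ ≤ lamA M a) :
    ∫⁻ ω in U R M q, (R.P (M + 1) ω : ENNReal) ∂μ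
      ≤ (∫⁻ ω in U R M q, (R.P M ω : ENNReal) ∂μ)
          + ENNReal.ofReal (1 / Λ) * μ (U R M q) := by
  rw [lintegral_U, lintegral_U, measure_U, ← ENNReal.tsum_mul_left, ← ENNReal.tsum_add]
  apply ENNReal.tsum_le_tsum
  intro a
  rw [atom_mean R hM a.2.1, atom_lintegral_now R hM (fun m => (m : ENNReal)),
    measure_atom_eq R M a]
  have h0 := lamA_pos a.2.1
  have hle : (1 : ℝ) / lamA M a.1 ≤ 1 / Λ :=
    one_div_le_one_div_of_le hΛ0 (hΛ a.1 a.2.1 a.2.2)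
  calc ENNReal.ofReal ((a.1 M : ℝ) + 1 / lamA M a.1) * μ (V R M a.1)
      ≤ ENNReal.ofReal ((a.1 M : ℝ) + 1 / Λ) * μ (V R M a.1) := by
        apply mul_le_mul_left (ENNReal.ofReal_le_ofReal (by linarith))
    _ = ((a.1 M : ENNReal) + ENNReal.ofReal (1 / Λ)) * μ (V R M a.1) := by
        rw [ENNReal.ofReal_add (by positivity) (by positivity), ENNReal.ofReal_natCast]
    _ = (a.1 M : ENNReal) * μ (V R M a.1) + ENNReal.ofReal (1 / Λ) * μ (V R M a.1) := by
        rw [add_mul]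

/-- Real exponential-moment bound for the geometric step. -/
lemma geom_tsum_exp {lam s : ℝ} (h0 : 0 < lam) (h1 : lam ≤ 1) (hs : 0 < s) (A : ℝ) :
    ∑' j : ℕ, Real.exp (-(s * (A + (j + 1)))) * ((1 - lam) ^ j * lam)
      ≤ Real.exp (-(s * A)) * (lam / (s + lam)) := by
  set y := (1 - lam) * Real.exp (-s) with hy
  have hE0 : 0 < Real.exp (-s) := Real.exp_pos _
  have hE1 : Real.exp (-s) < 1 := Real.exp_lt_one_iff.2 (by linarith)
  have hy0 : 0 ≤ y := mul_nonneg (by linarith) hE0.le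
  have hy1 : y < 1 := by
    calc y ≤ Real.exp (-s) := by nlinarith
    _ < 1 := hE1
  have hEs : Real.exp (-s) * (1 + s) ≤ 1 := by
    have h := Real.add_one_le_exp s
    have hinv : Real.exp (-s) * Real.exp s = 1 := by rw [← Real.exp_add]; simp
    nlinarith [Real.exp_pos (-s), mul_le_mul_of_nonneg_left h (Real.exp_pos (-s)).le]
  have hterm : ∀ j : ℕ, Real.exp (-(s * (A + (j + 1)))) * ((1 - lam) ^ j * lam)
      = (Real.exp (-(s * A)) * (Real.exp (-s) * lam)) * y ^ j := by
    intro j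
    have e : Real.exp (-(s * (A + (j + 1))))
        = Real.exp (-(s * A)) * Real.exp (-s) * Real.exp (-s) ^ j := by
      rw [← Real.exp_nat_mul, ← Real.exp_add, ← Real.exp_add]
      ring_nf
    rw [e, hy, mul_pow]
    ring
  rw [tsum_congr hterm, tsum_mul_left, tsum_geometric_of_lt_one hy0 hy1]
  have h1y : (s + lam) / (1 + s) ≤ 1 - y := by
    rw [hy, div_le_iff₀ (by linarith : (0:ℝ) < 1 + s)]
    nlinarith [mul_le_mul_of_nonneg_left hEs (by linarith : (0:ℝ) ≤ 1 - lam)]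
  have h1ypos : 0 < 1 - y := lt_of_lt_of_le (by positivity) h1y
  have hinvle : (1 - y)⁻¹ ≤ (1 + s) / (s + lam) := by
    have := one_div_le_one_div_of_le (by positivity) h1y
    rw [one_div_div] at this
    simpa [one_div] using this
  have hfin : Real.exp (-s) * lam * ((1 + s) / (s + lam)) ≤ lam / (s + lam) := by
    rw [← mul_div_assoc, div_le_div_iff₀ (by linarith) (by linarith)]
    nlinarith [mul_le_mul_of_nonneg_right (mul_le_mul_of_nonneg_left hEs h0.le)
      (by linarith : (0:ℝ) ≤ s + lam)]
  calc Real.exp (-(s * A)) * (Real.exp (-s) * lam) * (1 - y)⁻¹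
      ≤ Real.exp (-(s * A)) * (Real.exp (-s) * lam) * ((1 + s) / (s + lam)) := by
        apply mul_le_mul_of_nonneg_left hinvle (by positivity)
    _ ≤ Real.exp (-(s * A)) * (lam / (s + lam)) := by
        rw [mul_assoc]
        apply mul_le_mul_of_nonneg_left _ (Real.exp_pos _).le
        calc Real.exp (-s) * lam * ((1 + s) / (s + lam))
            = Real.exp (-s) * lam * ((1 + s) / (s + lam)) := rfl
        _ ≤ lam / (s + lam) := hfin

lemma geom_exp_summable {lam s : ℝ} (h0 : 0 < lam) (h1 : lam ≤ 1) (hs : 0 < s) (A : ℝ) :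
    Summable (fun j : ℕ => Real.exp (-(s * (A + (j + 1)))) * ((1 - lam) ^ j * lam)) := by
  have hE0 : 0 < Real.exp (-s) := Real.exp_pos _
  have hE1 : Real.exp (-s) < 1 := Real.exp_lt_one_iff.2 (by linarith)
  have hy0 : 0 ≤ (1 - lam) * Real.exp (-s) := mul_nonneg (by linarith) hE0.le
  have hy1 : (1 - lam) * Real.exp (-s) < 1 := by nlinarith
  apply Summable.congr (((summable_geometric_of_lt_one hy0 hy1).mul_left
    (Real.exp (-(s * A)) * (Real.exp (-s) * lam))))
  intro j
  have e : Real.exp (-(s * (A + (j + 1))))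
      = Real.exp (-(s * A)) * Real.exp (-s) * Real.exp (-s) ^ j := by
    rw [← Real.exp_nat_mul, ← Real.exp_add, ← Real.exp_add]
    ring_nf
  rw [e, mul_pow]
  ring

/-- Exponential moment of `P (M+1)` over a good atom. -/
lemma atom_exp (R : RenewalCovering μ) {M : ℕ} (hM : 1 ≤ M) {a : ℕ → ℕ} (ha : a ∈ S M)
    {s Λ' : ℝ} (hs : 0 < s) (hΛ'0 : 0 < Λ') (hlamL : lamA M a ≤ Λ') :
    ∫⁻ ω in V R M a ∩ Og R, ENNReal.ofReal (Real.exp (-(s * (R.P (M + 1) ω : ℝ)))) ∂μ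
      ≤ ENNReal.ofReal (Λ' / (s + Λ'))
          * (ENNReal.ofReal (Real.exp (-(s * (a M : ℝ)))) * μ (V R M a)) := by
  rw [atom_lintegral R hM ha (fun m => ENNReal.ofReal (Real.exp (-(s * (m : ℝ)))))]
  have h0 := lamA_pos ha
  have h1 := lamA_le_one ha
  have hterm : ∀ j : ℕ,
      ENNReal.ofReal (Real.exp (-(s * ((a M + (j + 1) : ℕ) : ℝ))))
        * (ENNReal.ofReal ((1 - lamA M a) ^ j * lamA M a) * μ (V R M a))
      = ENNReal.ofReal (Real.exp (-(s * ((a M : ℝ) + (j + 1))))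
          * ((1 - lamA M a) ^ j * lamA M a)) * μ (V R M a) := by
    intro j
    rw [← mul_assoc, ← ENNReal.ofReal_mul (Real.exp_pos _).le]
    norm_num
  rw [tsum_congr hterm, ENNReal.tsum_mul_right,
    ← ENNReal.ofReal_tsum_of_nonneg
      (fun j => mul_nonneg (Real.exp_pos _).le
        (mul_nonneg (pow_nonneg (by linarith) j) h0.le))
      (geom_exp_summable h0 h1 hs (a M : ℝ))]
  have hbound := geom_tsum_exp h0 h1 hs (a M : ℝ)
  have hmono : lamA M a / (s + lamA M a) ≤ Λ' / (s + Λ') := by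
    rw [div_le_div_iff₀ (by linarith) (by linarith)]
    nlinarith
  calc ENNReal.ofReal (∑' j : ℕ, Real.exp (-(s * ((a M : ℝ) + (j + 1))))
          * ((1 - lamA M a) ^ j * lamA M a)) * μ (V R M a)
      ≤ ENNReal.ofReal (Real.exp (-(s * (a M : ℝ))) * (Λ' / (s + Λ'))) * μ (V R M a) := by
        apply mul_le_mul_left
        apply ENNReal.ofReal_le_ofReal
        calc (∑' j : ℕ, Real.exp (-(s * ((a M : ℝ) + (j + 1))))
                * ((1 - lamA M a) ^ j * lamA M a))
            ≤ Real.exp (-(s * (a M : ℝ))) * (lamA M a / (s + lamA M a)) := hbound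
          _ ≤ Real.exp (-(s * (a M : ℝ))) * (Λ' / (s + Λ')) :=
              mul_le_mul_of_nonneg_left hmono (Real.exp_pos _).le
    _ = ENNReal.ofReal (Λ' / (s + Λ'))
          * (ENNReal.ofReal (Real.exp (-(s * (a M : ℝ)))) * μ (V R M a)) := by
        rw [← mul_assoc, ← ENNReal.ofReal_mul (by positivity : (0:ℝ) ≤ Λ' / (s + Λ')),
          mul_comm (Λ' / (s + Λ'))]

/-- One-step exponential-moment bound over a union of good atoms. -/
lemma step_exp (R : RenewalCovering μ) {M : ℕ} (hM : 1 ≤ M) (q : (ℕ → ℕ) → Prop)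
    {s Λ' : ℝ} (hs : 0 < s) (hΛ'0 : 0 < Λ')
    (hΛ : ∀ a ∈ S M, q a → lamA M a ≤ Λ') :
    ∫⁻ ω in U R M q, ENNReal.ofReal (Real.exp (-(s * (R.P (M + 1) ω : ℝ)))) ∂μ
      ≤ ENNReal.ofReal (Λ' / (s + Λ'))
          * ∫⁻ ω in U R M q, ENNReal.ofReal (Real.exp (-(s * (R.P M ω : ℝ)))) ∂μ := by
  rw [lintegral_U, lintegral_U, ← ENNReal.tsum_mul_left]
  apply ENNReal.tsum_le_tsum
  intro a
  rw [atom_lintegral_now R hM (fun m => ENNReal.ofReal (Real.exp (-(s * (m : ℝ)))))]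
  rw [measure_atom_eq R M a]
  exact atom_exp R hM a.2.1 hs hΛ'0 (hΛ a.1 a.2.1 a.2.2)

lemma neg_log_one_sub_le {x : ℝ} (hx0 : 0 < x) (hx : x ≤ 1/2) :
    -Real.log (1 - x) ≤ x + 2*x^2 := by
  have h1 : (0:ℝ) < 1 - x := by linarith
  have h2 : (1 - x)⁻¹ ≤ 1 + x + 2*x^2 := by
    rw [← one_div, div_le_iff₀ h1]
    nlinarith
  have h3 : (1:ℝ) + (x + 2*x^2) ≤ Real.exp (x + 2*x^2) := by
    linarith [Real.add_one_le_exp (x + 2*x^2)]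
  have h5 : Real.log ((1-x)⁻¹) ≤ x + 2*x^2 := by
    rw [Real.log_le_iff_le_exp (by positivity)]
    linarith
  rwa [Real.log_inv] at h5

lemma log_diff_ge {a b : ℝ} (ha : 0 < a) (hab : a ≤ b) :
    (b - a)/b ≤ Real.log b - Real.log a := by
  have hb : 0 < b := lt_of_lt_of_le ha hab
  have h := Real.log_le_sub_one_of_pos (show 0 < a/b by positivity)
  rw [Real.log_div (ne_of_gt ha) (ne_of_gt hb)] at h
  have e : (b - a)/b = 1 - a/b := by field_simp
  linarith

lemma log_diff_le {a b : ℝ} (ha : 0 < a) (hab : a ≤ b) :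
    Real.log b - Real.log a ≤ (b - a)/a := by
  have hb : 0 < b := lt_of_lt_of_le ha hab
  have h := Real.log_le_sub_one_of_pos (show 0 < b/a by positivity)
  rw [Real.log_div (ne_of_gt hb) (ne_of_gt ha)] at h
  have e : (b - a)/a = b/a - 1 := by field_simp
  linarith

lemma llog_lower (k : ℕ) (hk : 2 ≤ k) :
    1/(((k:ℝ)+1) * Real.log ((k:ℝ)+1))
      ≤ Real.log (Real.log ((k:ℝ)+1)) - Real.log (Real.log k) := by
  have hk2 : (2:ℝ) ≤ (k:ℝ) := by exact_mod_cast hk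
  have hlogk : 0 < Real.log (k:ℝ) := Real.log_pos (by linarith)
  have hmono : Real.log (k:ℝ) ≤ Real.log ((k:ℝ)+1) :=
    Real.log_le_log (by linarith) (by linarith)
  have hlogk1 : 0 < Real.log ((k:ℝ)+1) := lt_of_lt_of_le hlogk hmono
  have h1 : 1/((k:ℝ)+1) ≤ Real.log ((k:ℝ)+1) - Real.log k := by
    have h := log_diff_ge (show (0:ℝ) < k by linarith) (show (k:ℝ) ≤ (k:ℝ)+1 by linarith)
    have e : ((k:ℝ)+1 - k)/((k:ℝ)+1) = 1/((k:ℝ)+1) := by ring_nf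
    linarith [e ▸ h]
  have h2 := log_diff_ge hlogk hmono
  calc 1/(((k:ℝ)+1) * Real.log ((k:ℝ)+1))
      = (1/((k:ℝ)+1))/Real.log ((k:ℝ)+1) := by rw [div_div]
    _ ≤ (Real.log ((k:ℝ)+1) - Real.log k)/Real.log ((k:ℝ)+1) := by gcongr
    _ ≤ Real.log (Real.log ((k:ℝ)+1)) - Real.log (Real.log k) := h2

lemma llog_upper (k : ℕ) (hk : 2 ≤ k) :
    Real.log (Real.log ((k:ℝ)+1)) - Real.log (Real.log k) ≤ 1/((k:ℝ) * Real.log k) := by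
  have hk2 : (2:ℝ) ≤ (k:ℝ) := by exact_mod_cast hk
  have hlogk : 0 < Real.log (k:ℝ) := Real.log_pos (by linarith)
  have hmono : Real.log (k:ℝ) ≤ Real.log ((k:ℝ)+1) :=
    Real.log_le_log (by linarith) (by linarith)
  have h1 : Real.log ((k:ℝ)+1) - Real.log k ≤ 1/(k:ℝ) := by
    have h := log_diff_le (show (0:ℝ) < k by linarith) (show (k:ℝ) ≤ (k:ℝ)+1 by linarith)
    have e : ((k:ℝ)+1 - k)/(k:ℝ) = 1/(k:ℝ) := by ring_nf
    linarith [e ▸ h]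
  have h2 := log_diff_le hlogk hmono
  calc Real.log (Real.log ((k:ℝ)+1)) - Real.log (Real.log k)
      ≤ (Real.log ((k:ℝ)+1) - Real.log k)/Real.log k := h2
    _ ≤ (1/(k:ℝ))/Real.log k := by gcongr
    _ = 1/((k:ℝ) * Real.log k) := by rw [div_div]

lemma one_le_two_log_two : (1:ℝ) ≤ 2 * Real.log 2 := by
  have h4 : Real.exp 1 ≤ 4 := le_of_lt (lt_trans Real.exp_one_lt_d9 (by norm_num))
  have hl4 : Real.log 4 = 2 * Real.log 2 := by
    rw [show (4:ℝ) = 2^2 by norm_num, Real.log_pow]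
    push_cast; ring
  have h5 : (1:ℝ) ≤ Real.log 4 := by
    rw [Real.le_log_iff_exp_le (by norm_num)]; exact h4
  linarith

lemma sum_inv_klogk_le (M : ℕ) (hM : 2 ≤ M) :
    ∑ k ∈ Finset.Icc 2 M, 1/((k:ℝ) * Real.log k)
      ≤ 1 + (Real.log (Real.log M) - Real.log (Real.log 2)) := by
  induction M, hM using Nat.le_induction with
  | base =>
    rw [Finset.Icc_self, Finset.sum_singleton]
    have hpos : (0:ℝ) < 2 * Real.log 2 := by
      have := one_le_two_log_two; linarith
    have : ((2:ℕ):ℝ) * Real.log ((2:ℕ):ℝ) = 2 * Real.log 2 := by norm_num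
    rw [this, div_le_iff₀ hpos]
    have := one_le_two_log_two
    norm_num
    linarith
  | succ M hM ih =>
    rw [Finset.sum_Icc_succ_top (by omega : 2 ≤ M + 1)]
    have hstep := llog_lower M hM
    have hcast : ((M+1:ℕ):ℝ) = (M:ℝ)+1 := by push_cast; ring
    rw [hcast]
    linarith

lemma sum_inv_klogk_ge (K0 : ℕ) (hK0 : 2 ≤ K0) (M : ℕ) (hM : K0 ≤ M) :
    Real.log (Real.log ((M:ℝ)+1)) - Real.log (Real.log K0)
      ≤ ∑ k ∈ Finset.Icc K0 M, 1/((k:ℝ) * Real.log k) := by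
  induction M, hM using Nat.le_induction with
  | base =>
    rw [Finset.Icc_self, Finset.sum_singleton]
    exact llog_upper K0 hK0
  | succ M hM ih =>
    rw [Finset.sum_Icc_succ_top (by omega : K0 ≤ M + 1)]
    have hstep := llog_upper (M+1) (by omega)
    have hcast : ((M+1:ℕ):ℝ) = (M:ℝ)+1 := by push_cast; ring
    rw [hcast] at hstep ⊢
    linarith

lemma tele_sum (M : ℕ) : ∑ k ∈ Finset.Icc 1 M, (1/(k:ℝ) - 1/((k:ℝ)+1)) = 1 - 1/((M:ℝ)+1) := by
  induction M with
  | zero => simp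
  | succ M ih =>
    rw [Finset.sum_Icc_succ_top (by omega : 1 ≤ M + 1), ih]
    have hcast : ((M+1:ℕ):ℝ) = (M:ℝ)+1 := by push_cast; ring
    rw [hcast]
    have h1 : (M:ℝ) + 1 ≠ 0 := by positivity
    have h2 : (M:ℝ) + 1 + 1 ≠ 0 := by positivity
    field_simp
    ring

/-- Deterministic lower-bound path for part 1. -/
noncomputable def cP (ε : ℝ) (N : ℕ) : ℕ → ℝ :=
  fun k => if N < k then max ((k:ℝ)+1) ((1+ε)*k*Real.log k) else ((k:ℝ)+1)

/-- Deterministic lower bound for `lam` on the part-1 event. -/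
noncomputable def LamP (ε : ℝ) (N : ℕ) (M : ℕ) : ℝ :=
  ∏ k ∈ Finset.Icc 1 M, (1 - 1/cP ε N k)

lemma cP_ge {ε : ℝ} {N : ℕ} (k : ℕ) : (k:ℝ)+1 ≤ cP ε N k := by
  unfold cP; split_ifs
  · exact le_max_left _ _
  · exact le_refl _

lemma cP_two {ε : ℝ} {N : ℕ} (k : ℕ) (hk : 1 ≤ k) : 2 ≤ cP ε N k := by
  have h := cP_ge (ε := ε) (N := N) k
  have : (1:ℝ) ≤ (k:ℝ) := by exact_mod_cast hk
  linarith

lemma cP_fac_mem {ε : ℝ} {N : ℕ} (k : ℕ) (hk : 1 ≤ k) :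
    (1:ℝ)/2 ≤ 1 - 1/cP ε N k ∧ 1 - 1/cP ε N k < 1 := by
  have h2 := cP_two (ε := ε) (N := N) k hk
  have hpos : (0:ℝ) < cP ε N k := by linarith
  constructor
  · have : 1/cP ε N k ≤ 1/2 := by
      apply one_div_le_one_div_of_le <;> linarith
    linarith
  · have : 0 < 1/cP ε N k := by positivity
    linarith

lemma LamP_pos {ε : ℝ} {N : ℕ} (M : ℕ) : 0 < LamP ε N M :=
  Finset.prod_pos fun k hk =>
    lt_of_lt_of_le (by norm_num) (cP_fac_mem k (Finset.mem_Icc.1 hk).1).1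

lemma LamP_anti {ε : ℝ} {N : ℕ} (M : ℕ) : LamP ε N (M+1) ≤ LamP ε N M := by
  unfold LamP
  rw [Finset.prod_Icc_succ_top (by omega : 1 ≤ M + 1)]
  have h := cP_fac_mem (ε := ε) (N := N) (M+1) (by omega)
  have hpos := LamP_pos (ε := ε) (N := N) M
  unfold LamP at hpos
  nlinarith [h.1, h.2]

lemma LamP_le_lamA {ε : ℝ} {N : ℕ} {M : ℕ} (hM : 1 ≤ M) {a : ℕ → ℕ} (ha : a ∈ S M)
    (hq : ∀ n, N < n → n ≤ M → (1+ε)*n*Real.log n < (a n:ℝ)) :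
    LamP ε N M ≤ lamA M a := by
  apply Finset.prod_le_prod
  · intro k hk
    have := cP_fac_mem (ε := ε) (N := N) k (Finset.mem_Icc.1 hk).1
    linarith [this.1]
  · intro k hk
    obtain ⟨hk1, hk2⟩ := Finset.mem_Icc.1 hk
    have hak : (k:ℝ)+1 ≤ (a k:ℝ) := by exact_mod_cast S_ge ha k hk1 hk2
    have hcpos : (0:ℝ) < cP ε N k := by linarith [cP_two (ε := ε) (N := N) k hk1]
    have hck : cP ε N k ≤ (a k:ℝ) := by
      unfold cP
      split_ifs with h
      · exact max_le hak (le_of_lt (hq k h hk2))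
      · exact hak
    have : 1/(a k:ℝ) ≤ 1/cP ε N k := one_div_le_one_div_of_le hcpos hck
    linarith

lemma log_log_two_neg : Real.log (Real.log 2) < 0 := by
  have h2 : Real.log 2 < 1 := by
    have he : (2:ℝ) < Real.exp 1 := by
      have := Real.exp_one_gt_d9; linarith
    calc Real.log 2 < Real.log (Real.exp 1) := Real.log_lt_log (by norm_num) he
      _ = 1 := Real.log_exp 1
  exact Real.log_neg (Real.log_pos one_lt_two) h2

lemma inv_LamP_le {ε : ℝ} {N : ℕ} (hε : 0 < ε) (hN : 1 ≤ N) {M : ℕ} (hM : 2 ≤ M) :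
    1/LamP ε N M
      ≤ Real.exp (((N:ℝ) + 3 - Real.log (Real.log 2))
          + (1/(1+ε)) * Real.log (Real.log M)) := by
  set θ := 1/(1+ε) with hθdef
  have hθpos : 0 < θ := by rw [hθdef]; positivity
  have hθ1 : θ ≤ 1 := by rw [hθdef, div_le_one (by linarith)]; linarith
  have hfacne : ∀ k ∈ Finset.Icc 1 M, (1 - 1/cP ε N k) ≠ 0 := fun k hk =>
    ne_of_gt (lt_of_lt_of_le (by norm_num) (cP_fac_mem k (Finset.mem_Icc.1 hk).1).1)
  have hlog : Real.log (1/LamP ε N M)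
      = ∑ k ∈ Finset.Icc 1 M, -Real.log (1 - 1/cP ε N k) := by
    rw [one_div, Real.log_inv, LamP, Real.log_prod hfacne, ← Finset.sum_neg_distrib]
  have hterm : ∀ k ∈ Finset.Icc 1 M, -Real.log (1 - 1/cP ε N k)
      ≤ 1/cP ε N k + 2*(1/cP ε N k)^2 := by
    intro k hk
    obtain ⟨hk1, _⟩ := Finset.mem_Icc.1 hk
    have h2 := cP_two (ε := ε) (N := N) k hk1
    have hpos : (0:ℝ) < cP ε N k := by linarith
    exact neg_log_one_sub_le (by positivity) (one_div_le_one_div_of_le (by norm_num) h2)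
  have hsq : ∑ k ∈ Finset.Icc 1 M, 2*(1/cP ε N k)^2 ≤ 2 := by
    have hterm2 : ∀ k ∈ Finset.Icc 1 M, 2*(1/cP ε N k)^2
        ≤ 2*(1/(k:ℝ) - 1/((k:ℝ)+1)) := by
      intro k hk
      obtain ⟨hk1, _⟩ := Finset.mem_Icc.1 hk
      have hk1' : (1:ℝ) ≤ (k:ℝ) := by exact_mod_cast hk1
      have hge := cP_ge (ε := ε) (N := N) k
      have hpos : (0:ℝ) < cP ε N k := by linarith
      have h1 : (1/cP ε N k)^2 ≤ 1/((k:ℝ)*((k:ℝ)+1)) := by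
        have hsq' : (k:ℝ)*((k:ℝ)+1) ≤ (cP ε N k)^2 := by nlinarith
        calc (1/cP ε N k)^2 = 1/(cP ε N k)^2 := by rw [div_pow]; norm_num
          _ ≤ 1/((k:ℝ)*((k:ℝ)+1)) := one_div_le_one_div_of_le (by positivity) hsq'
      have h2' : 1/((k:ℝ)*((k:ℝ)+1)) = 1/(k:ℝ) - 1/((k:ℝ)+1) := by
        field_simp
        ring
      linarith
    calc ∑ k ∈ Finset.Icc 1 M, 2*(1/cP ε N k)^2
        ≤ ∑ k ∈ Finset.Icc 1 M, 2*(1/(k:ℝ) - 1/((k:ℝ)+1)) := Finset.sum_le_sum hterm2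
      _ = 2*(1 - 1/((M:ℝ)+1)) := by rw [← Finset.mul_sum, tele_sum]
      _ ≤ 2 := by
          have : (0:ℝ) ≤ 1/((M:ℝ)+1) := by positivity
          linarith
  have hfirst : ∑ k ∈ Finset.Icc 1 M, 1/cP ε N k
      ≤ (N:ℝ) + θ*(1 + (Real.log (Real.log M) - Real.log (Real.log 2))) := by
    rw [← Finset.sum_filter_add_sum_filter_not (Finset.Icc 1 M) (fun k => k ≤ N)]
    have hA : ∑ k ∈ (Finset.Icc 1 M).filter (fun k => k ≤ N), 1/cP ε N k ≤ (N:ℝ) := by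
      have hsub : (Finset.Icc 1 M).filter (fun k => k ≤ N) ⊆ Finset.Icc 1 N := by
        intro k hk; simp only [Finset.mem_filter, Finset.mem_Icc] at *; omega
      calc ∑ k ∈ (Finset.Icc 1 M).filter (fun k => k ≤ N), 1/cP ε N k
          ≤ ∑ k ∈ Finset.Icc 1 N, 1/cP ε N k := by
            apply Finset.sum_le_sum_of_subset_of_nonneg hsub
            intro k hk _
            have h2 := cP_two (ε := ε) (N := N) k (Finset.mem_Icc.1 hk).1
            positivity
        _ ≤ ∑ _k ∈ Finset.Icc 1 N, (1:ℝ) := by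
            apply Finset.sum_le_sum
            intro k hk
            have h2 := cP_two (ε := ε) (N := N) k (Finset.mem_Icc.1 hk).1
            rw [div_le_one (by linarith)]; linarith
        _ = (N:ℝ) := by simp
    have hBeq : (Finset.Icc 1 M).filter (fun k => ¬ k ≤ N) = Finset.Icc (N+1) M := by
      ext k; simp only [Finset.mem_filter, Finset.mem_Icc]; omega
    rw [hBeq]
    have hB : ∑ k ∈ Finset.Icc (N+1) M, 1/cP ε N k
        ≤ θ * ∑ k ∈ Finset.Icc 2 M, 1/((k:ℝ)*Real.log k) := by
      calc ∑ k ∈ Finset.Icc (N+1) M, 1/cP ε N k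
          ≤ ∑ k ∈ Finset.Icc (N+1) M, θ*(1/((k:ℝ)*Real.log k)) := by
            apply Finset.sum_le_sum
            intro k hk
            obtain ⟨hk1, hk2⟩ := Finset.mem_Icc.1 hk
            have hkN : N < k := by omega
            have hk2' : (2:ℝ) ≤ (k:ℝ) := by exact_mod_cast (by omega : 2 ≤ k)
            have hlogk : 0 < Real.log (k:ℝ) := Real.log_pos (by linarith)
            have hck : (1+ε)*(k:ℝ)*Real.log k ≤ cP ε N k := by
              unfold cP; rw [if_pos hkN]; exact le_max_right _ _
            have hpos : (0:ℝ) < (1+ε)*(k:ℝ)*Real.log k := by positivity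
            have heq : θ*(1/((k:ℝ)*Real.log k)) = 1/((1+ε)*(k:ℝ)*Real.log k) := by
              rw [hθdef]; field_simp
            rw [heq]
            exact one_div_le_one_div_of_le hpos hck
        _ ≤ ∑ k ∈ Finset.Icc 2 M, θ*(1/((k:ℝ)*Real.log k)) := by
            apply Finset.sum_le_sum_of_subset_of_nonneg
            · intro k hk
              simp only [Finset.mem_Icc] at *
              omega
            · intro k hk _
              obtain ⟨hk1, _⟩ := Finset.mem_Icc.1 hk
              have hk2' : (2:ℝ) ≤ (k:ℝ) := by exact_mod_cast hk1
              have hlogk : 0 < Real.log (k:ℝ) := Real.log_pos (by linarith)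
              positivity
        _ = θ * ∑ k ∈ Finset.Icc 2 M, 1/((k:ℝ)*Real.log k) := by rw [Finset.mul_sum]
    have hsum := sum_inv_klogk_le M hM
    have : θ * ∑ k ∈ Finset.Icc 2 M, 1/((k:ℝ)*Real.log k)
        ≤ θ*(1 + (Real.log (Real.log M) - Real.log (Real.log 2))) :=
      mul_le_mul_of_nonneg_left hsum hθpos.le
    linarith
  have hll2 := log_log_two_neg
  have hcollect : Real.log (1/LamP ε N M)
      ≤ ((N:ℝ) + 3 - Real.log (Real.log 2)) + θ * Real.log (Real.log M) := by
    rw [hlog]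
    calc ∑ k ∈ Finset.Icc 1 M, -Real.log (1 - 1/cP ε N k)
        ≤ ∑ k ∈ Finset.Icc 1 M, (1/cP ε N k + 2*(1/cP ε N k)^2) :=
          Finset.sum_le_sum hterm
      _ = (∑ k ∈ Finset.Icc 1 M, 1/cP ε N k)
          + ∑ k ∈ Finset.Icc 1 M, 2*(1/cP ε N k)^2 := Finset.sum_add_distrib
      _ ≤ ((N:ℝ) + 3 - Real.log (Real.log 2)) + θ * Real.log (Real.log M) := by
          have hint : θ*(1 - Real.log (Real.log 2)) ≤ 1*(1 - Real.log (Real.log 2)) :=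
            mul_le_mul_of_nonneg_right hθ1 (by linarith)
          have hexp : θ*(1 + (Real.log (Real.log M) - Real.log (Real.log 2)))
              = θ*Real.log (Real.log M) + θ*(1 - Real.log (Real.log 2)) := by ring
          linarith
  calc 1/LamP ε N M = Real.exp (Real.log (1/LamP ε N M)) := by
        rw [Real.exp_log (one_div_pos.2 (LamP_pos M))]
    _ ≤ _ := Real.exp_le_exp.2 hcollect

lemma part1 (R : RenewalCovering μ) [IsProbabilityMeasure μ] {ε : ℝ} (hε : 0 < ε)
    {N : ℕ} (hN : 0 < N) :
    μ {ω | ∀ n, N < n → (1 + ε) * n * Real.log n < (R.P n ω : ℝ)} = 0 := by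
  set E := {ω : Ω | ∀ n, N < n → (1 + ε) * n * Real.log n < (R.P n ω : ℝ)} with hE
  set q : ℕ → (ℕ → ℕ) → Prop :=
    fun M a => ∀ n, N < n → n ≤ M → (1+ε) * n * Real.log n < (a n : ℝ) with hq
  have hqinv : ∀ M, ∀ a b : ℕ → ℕ, (∀ i, 1 ≤ i → i ≤ M → a i = b i) → q M a → q M b := by
    intro M a b hab hqa n hn1 hn2
    rw [← hab n (by omega) hn2]
    exact hqa n hn1 hn2
  have hEsub : ∀ M, 1 ≤ M → E ∩ Og R ⊆ U R M (q M) := by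
    intro M hM
    rw [← inter_Og_eq_U R hM (q M) (hqinv M)]
    apply Set.inter_subset_inter_left
    intro ω hω n hn1 _
    exact hω n hn1
  have hUsub : ∀ M, 1 ≤ M → U R (M+1) (q (M+1)) ⊆ U R M (q M) := by
    intro M hM
    rw [← inter_Og_eq_U R hM (q M) (hqinv M),
      ← inter_Og_eq_U R (by omega) (q (M+1)) (hqinv (M+1))]
    apply Set.inter_subset_inter_left
    intro ω hω n hn1 hn2
    exact hω n hn1 (by omega)
  set Z : ℕ → ENNReal := fun M => ∫⁻ ω in U R M (q M), (R.P M ω : ENNReal) ∂μ with hZ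
  have hΛle : ∀ M, 1 ≤ M → ∀ a ∈ S M, q M a → LamP ε N M ≤ lamA M a :=
    fun M hM a ha hqa => LamP_le_lamA hM ha hqa
  have hZstep : ∀ M, 1 ≤ M → Z (M+1) ≤ Z M + ENNReal.ofReal (1/LamP ε N M) := by
    intro M hM
    calc Z (M+1) ≤ ∫⁻ ω in U R M (q M), (R.P (M+1) ω : ENNReal) ∂μ :=
        lintegral_mono_set (hUsub M hM)
      _ ≤ Z M + ENNReal.ofReal (1/LamP ε N M) * μ (U R M (q M)) :=
        step_mean R hM (q M) (LamP_pos M) (hΛle M hM)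
      _ ≤ Z M + ENNReal.ofReal (1/LamP ε N M) * 1 := by
        gcongr
        exact prob_le_one
      _ = Z M + ENNReal.ofReal (1/LamP ε N M) := by rw [mul_one]
  have hZ1 : Z 1 ≤ 2 := by
    rw [hZ]
    dsimp only
    rw [lintegral_U]
    have hval : ∀ a : ↥(S 1 ∩ {a | q 1 a}),
        ∫⁻ ω in V R 1 a.1 ∩ Og R, (R.P 1 ω : ENNReal) ∂μ
          = 2 * μ (V R 1 a.1 ∩ Og R) := by
      intro a
      rw [atom_lintegral_now R le_rfl (fun m => (m : ENNReal)), a.2.1.1]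
      norm_num
    rw [tsum_congr hval, ENNReal.tsum_mul_left, ← measure_U]
    calc 2 * μ (U R 1 (q 1)) ≤ 2 * 1 := by gcongr; exact prob_le_one
      _ = 2 := mul_one 2
  have hZbound : ∀ M, 1 ≤ M → Z M ≤ 2 + (M : ENNReal) * ENNReal.ofReal (1/LamP ε N M) := by
    intro M hM
    induction M, hM using Nat.le_induction with
    | base => exact le_trans hZ1 le_self_add
    | succ M hM ih =>
      have hmono : ENNReal.ofReal (1/LamP ε N M) ≤ ENNReal.ofReal (1/LamP ε N (M+1)) :=
        ENNReal.ofReal_le_ofReal (one_div_le_one_div_of_le (LamP_pos (M+1)) (LamP_anti M))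
      calc Z (M+1) ≤ Z M + ENNReal.ofReal (1/LamP ε N M) := hZstep M hM
        _ ≤ (2 + (M : ENNReal) * ENNReal.ofReal (1/LamP ε N M))
            + ENNReal.ofReal (1/LamP ε N M) := by gcongr
        _ = 2 + ((M+1 : ℕ) : ENNReal) * ENNReal.ofReal (1/LamP ε N M) := by
            push_cast
            ring
        _ ≤ 2 + ((M+1 : ℕ) : ENNReal) * ENNReal.ofReal (1/LamP ε N (M+1)) := by gcongr
  have hlow : ∀ M, N < M →
      ENNReal.ofReal ((1+ε)*M*Real.log M) * μ (U R M (q M)) ≤ Z M := by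
    intro M hNM
    have hM1 : 1 ≤ M := by omega
    rw [hZ]
    dsimp only
    rw [lintegral_U, measure_U, ← ENNReal.tsum_mul_left]
    apply ENNReal.tsum_le_tsum
    intro a
    rw [atom_lintegral_now R hM1 (fun m => (m : ENNReal))]
    apply mul_le_mul_left
    have hqa := a.2.2 M hNM le_rfl
    calc ENNReal.ofReal ((1+ε)*M*Real.log M) ≤ ENNReal.ofReal ((a.1 M : ℝ)) :=
        ENNReal.ofReal_le_ofReal (le_of_lt hqa)
      _ = ((a.1 M : ℕ) : ENNReal) := ENNReal.ofReal_natCast _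
  set K := ((N:ℝ) + 3 - Real.log (Real.log 2)) with hK
  set θ := 1/(1+ε) with hθ
  have hθpos : 0 < θ := by rw [hθ]; positivity
  have hθlt : θ < 1 := by
    rw [hθ, div_lt_one (by linarith)]
    linarith
  have hKpos : 0 < K := by
    rw [hK]
    have h1 : (1:ℝ) ≤ (N:ℝ) := by exact_mod_cast hN
    have := log_log_two_neg
    linarith
  have hfinal : ∀ M : ℕ, N + 3 ≤ M →
      μ (E ∩ Og R)
        ≤ ENNReal.ofReal ((2/(1+ε)) * Real.exp (K + (θ-1) * Real.log (Real.log M))) := by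
    intro M hM
    have hM2 : 2 ≤ M := by omega
    have hM1 : 1 ≤ M := by omega
    have hNM : N < M := by omega
    have hMR : (3:ℝ) ≤ (M:ℝ) := by exact_mod_cast (by omega : 3 ≤ M)
    have hlogM : 1 ≤ Real.log M := by
      rw [Real.le_log_iff_exp_le (by linarith)]
      linarith [Real.exp_one_lt_d9]
    have hlogMpos : 0 < Real.log (M:ℝ) := by linarith
    have hB : (0:ℝ) < (1+ε)*M*Real.log M := by positivity
    have hinv := inv_LamP_le hε hN hM2
    rw [← hK, ← hθ] at hinv
    have hexp1 : (1:ℝ) ≤ Real.exp (K + θ * Real.log (Real.log M)) := by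
      rw [show (1:ℝ) = Real.exp 0 from (Real.exp_zero).symm]
      apply Real.exp_le_exp.2
      have hllM : 0 ≤ Real.log (Real.log M) := Real.log_nonneg hlogM
      have : 0 ≤ θ * Real.log (Real.log M) := mul_nonneg hθpos.le hllM
      linarith
    have hnum : 2 + (M:ℝ)*(1/LamP ε N M)
        ≤ 2*(M:ℝ)*Real.exp (K + θ * Real.log (Real.log M)) := by
      have h1 : (M:ℝ)*(1/LamP ε N M) ≤ (M:ℝ)*Real.exp (K + θ*Real.log (Real.log M)) :=
        mul_le_mul_of_nonneg_left hinv (by positivity)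
      nlinarith
    have hchain : ENNReal.ofReal ((1+ε)*M*Real.log M) * μ (E ∩ Og R)
        ≤ ENNReal.ofReal (2*(M:ℝ)*Real.exp (K + θ * Real.log (Real.log M))) := by
      calc ENNReal.ofReal ((1+ε)*M*Real.log M) * μ (E ∩ Og R)
          ≤ ENNReal.ofReal ((1+ε)*M*Real.log M) * μ (U R M (q M)) := by
            exact mul_le_mul_right (measure_mono (hEsub M hM1)) _
        _ ≤ Z M := hlow M hNM
        _ ≤ 2 + (M : ENNReal) * ENNReal.ofReal (1/LamP ε N M) := hZbound M hM1
        _ = ENNReal.ofReal (2 + (M:ℝ)*(1/LamP ε N M)) := by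
            rw [ENNReal.ofReal_add (by norm_num)
                (mul_nonneg (Nat.cast_nonneg M) (le_of_lt (one_div_pos.2 (LamP_pos M)))),
              ENNReal.ofReal_mul (Nat.cast_nonneg M)]
            norm_num [ENNReal.ofReal_natCast]
        _ ≤ ENNReal.ofReal (2*(M:ℝ)*Real.exp (K + θ * Real.log (Real.log M))) :=
            ENNReal.ofReal_le_ofReal hnum
    have hdiv : μ (E ∩ Og R)
        ≤ ENNReal.ofReal ((2*(M:ℝ)*Real.exp (K + θ*Real.log (Real.log M)))
            /((1+ε)*M*Real.log M)) := by
      rw [ENNReal.ofReal_div_of_pos hB,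
        ENNReal.le_div_iff_mul_le (Or.inl (by simp [ENNReal.ofReal_eq_zero]; linarith))
          (Or.inl ENNReal.ofReal_ne_top), mul_comm]
      exact hchain
    have heq : (2*(M:ℝ)*Real.exp (K + θ*Real.log (Real.log M)))/((1+ε)*M*Real.log M)
        = (2/(1+ε)) * Real.exp (K + (θ-1)*Real.log (Real.log M)) := by
      have hlogMeq : Real.log (M:ℝ) = Real.exp (Real.log (Real.log (M:ℝ))) :=
        (Real.exp_log hlogMpos).symm
      rw [show K + (θ-1)*Real.log (Real.log (M:ℝ))
          = (K + θ*Real.log (Real.log (M:ℝ))) - Real.log (Real.log (M:ℝ)) by ring,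
        Real.exp_sub, ← hlogMeq]
      have hM0 : (M:ℝ) ≠ 0 := by linarith
      field_simp
    rw [heq] at hdiv
    exact hdiv
  have hten : Tendsto (fun M : ℕ =>
      ENNReal.ofReal ((2/(1+ε)) * Real.exp (K + (θ-1)*Real.log (Real.log M))))
      atTop (𝓝 0) := by
    have h1 : Tendsto (fun M : ℕ => Real.log (Real.log (M:ℝ))) atTop atTop :=
      (Real.tendsto_log_atTop.comp Real.tendsto_log_atTop).comp
        tendsto_natCast_atTop_atTop
    have h2 : Tendsto (fun x : ℝ => K + (θ-1)*x) atTop atBot :=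
      tendsto_atBot_add_const_left _ K (tendsto_id.const_mul_atTop_of_neg (by linarith))
    have h3 : Tendsto (fun M : ℕ => Real.exp (K + (θ-1)*Real.log (Real.log (M:ℝ))))
        atTop (𝓝 0) := Real.tendsto_exp_atBot.comp (h2.comp h1)
    have h4 := h3.const_mul (2/(1+ε))
    rw [mul_zero] at h4
    have h5 := ENNReal.tendsto_ofReal h4
    simpa using h5
  have hle0 : μ (E ∩ Og R) ≤ 0 := by
    apply ge_of_tendsto hten
    filter_upwards [eventually_ge_atTop (N+3)] with M hM
    exact hfinal M hM
  have hzero : μ (E ∩ Og R) = 0 := le_antisymm hle0 zero_le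
  rw [← measure_inter_conull (compl_Og_null R)]
  exact hzero

/-- Deterministic upper bound for `lam` on the part-2 event. -/
noncomputable def LamQ (δ : ℝ) (K0 : ℕ) (M : ℕ) : ℝ :=
  ∏ k ∈ Finset.Icc K0 M, (1 - 1/(δ*k*Real.log k))

section LamQ

variable {δ : ℝ} {K0 : ℕ} (hK0 : ∀ k : ℕ, K0 ≤ k → 2 ≤ δ*k*Real.log k)

include hK0

lemma LamQ_fac {k : ℕ} (hk : K0 ≤ k) :
    (1:ℝ)/2 ≤ 1 - 1/(δ*k*Real.log k) ∧ 1 - 1/(δ*k*Real.log k) < 1 := by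
  have h2 := hK0 k hk
  constructor
  · have : 1/(δ*k*Real.log k) ≤ 1/2 := by
      apply one_div_le_one_div_of_le <;> linarith
    linarith
  · have : 0 < 1/(δ*k*Real.log k) := by
      apply one_div_pos.2; linarith
    linarith

lemma LamQ_pos (M : ℕ) : 0 < LamQ δ K0 M :=
  Finset.prod_pos fun k hk =>
    lt_of_lt_of_le (by norm_num) (LamQ_fac hK0 (Finset.mem_Icc.1 hk).1).1

lemma LamQ_le_one (M : ℕ) : LamQ δ K0 M ≤ 1 :=
  Finset.prod_le_one
    (fun k hk => le_trans (by norm_num) (LamQ_fac hK0 (Finset.mem_Icc.1 hk).1).1)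
    (fun k hk => le_of_lt (LamQ_fac hK0 (Finset.mem_Icc.1 hk).1).2)

lemma LamQ_anti {m n : ℕ} (hm : K0 ≤ m) (hmn : m ≤ n) : LamQ δ K0 n ≤ LamQ δ K0 m := by
  induction n, hmn using Nat.le_induction with
  | base => exact le_refl _
  | succ n hn ih =>
    have hstep : LamQ δ K0 (n+1) ≤ LamQ δ K0 n := by
      unfold LamQ
      rw [Finset.prod_Icc_succ_top (by omega : K0 ≤ n + 1)]
      have h := LamQ_fac hK0 (show K0 ≤ n+1 by omega)
      have hpos := LamQ_pos hK0 n
      unfold LamQ at hpos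
      nlinarith [h.1, h.2]
    exact le_trans hstep ih

lemma lamA_le_LamQ {N M : ℕ} (hNK : N < K0) (hK02 : 2 ≤ K0) (hM : K0 ≤ M)
    {a : ℕ → ℕ} (ha : a ∈ S M)
    (hq : ∀ n, N < n → n ≤ M → (a n:ℝ) < δ * n * Real.log n) :
    lamA M a ≤ LamQ δ K0 M := by
  obtain ⟨K1, rfl⟩ : ∃ K1, K0 = K1 + 1 := ⟨K0 - 1, by omega⟩
  have hsplit : lamA M a
      = (∏ k ∈ Finset.Ioc 0 K1, (1 - 1/(a k:ℝ)))
        * ∏ k ∈ Finset.Ioc K1 M, (1 - 1/(a k:ℝ)) := by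
    rw [lamA, show Finset.Icc 1 M = Finset.Ioc 0 M from Finset.Icc_add_one_left_eq_Ioc 0 M,
      Finset.prod_Ioc_consecutive _ (Nat.zero_le K1) (by omega : K1 ≤ M)]
  have hfac : ∀ k, 1 ≤ k → k ≤ M → (0:ℝ) ≤ 1 - 1/(a k:ℝ) ∧ 1 - 1/(a k:ℝ) ≤ 1 := by
    intro k hk1 hk2
    have h2 : (2:ℝ) ≤ (a k:ℝ) := by exact_mod_cast (by have := S_ge ha k hk1 hk2; omega : 2 ≤ a k)
    constructor
    · have : 1/(a k:ℝ) ≤ 1/2 := by apply one_div_le_one_div_of_le <;> linarith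
      linarith
    · have : 0 ≤ 1/(a k:ℝ) := by positivity
      linarith
  have h1 : (∏ k ∈ Finset.Ioc 0 K1, (1 - 1/(a k:ℝ))) ≤ 1 := by
    apply Finset.prod_le_one
    · intro k hk
      obtain ⟨hk0, hk1⟩ := Finset.mem_Ioc.1 hk
      exact (hfac k (by omega) (by omega)).1
    · intro k hk
      obtain ⟨hk0, hk1⟩ := Finset.mem_Ioc.1 hk
      exact (hfac k (by omega) (by omega)).2
  have h2 : (∏ k ∈ Finset.Ioc K1 M, (1 - 1/(a k:ℝ))) ≤ LamQ δ (K1+1) M := by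
    rw [LamQ, show Finset.Icc (K1+1) M = Finset.Ioc K1 M from Finset.Icc_add_one_left_eq_Ioc K1 M]
    apply Finset.prod_le_prod
    · intro k hk
      obtain ⟨hk0, hk1⟩ := Finset.mem_Ioc.1 hk
      exact (hfac k (by omega) (by omega)).1
    · intro k hk
      obtain ⟨hk0, hk1⟩ := Finset.mem_Ioc.1 hk
      have hak : (0:ℝ) < (a k:ℝ) := by
        have := S_ge ha k (by omega) (by omega)
        exact_mod_cast (by omega : 0 < a k)
      have hlt : (a k:ℝ) ≤ δ*k*Real.log k := le_of_lt (hq k (by omega) (by omega))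
      have := one_div_le_one_div_of_le hak hlt
      linarith
  have h2nonneg : (0:ℝ) ≤ ∏ k ∈ Finset.Ioc K1 M, (1 - 1/(a k:ℝ)) := by
    apply Finset.prod_nonneg
    intro k hk
    obtain ⟨hk0, hk1⟩ := Finset.mem_Ioc.1 hk
    exact (hfac k (by omega) (by omega)).1
  calc lamA M a = _ := hsplit
    _ ≤ ∏ k ∈ Finset.Ioc K1 M, (1 - 1/(a k:ℝ)) := mul_le_of_le_one_left h2nonneg h1
    _ ≤ LamQ δ (K1+1) M := h2

lemma LamQ_le_exp {N M : ℕ} (hδ : 0 < δ) (hK02 : 2 ≤ K0) (hM : K0 ≤ M) :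
    LamQ δ K0 M ≤ Real.exp ((1/δ) * Real.log (Real.log K0)
      - (1/δ) * Real.log (Real.log M)) := by
  have hstep1 : LamQ δ K0 M ≤ Real.exp (-∑ k ∈ Finset.Icc K0 M, 1/(δ*k*Real.log k)) := by
    rw [← Finset.sum_neg_distrib, Real.exp_sum]
    apply Finset.prod_le_prod
    · intro k hk
      exact le_trans (by norm_num) (LamQ_fac hK0 (Finset.mem_Icc.1 hk).1).1
    · intro k hk
      have := Real.add_one_le_exp (-(1/(δ*k*Real.log k)))
      linarith
  have hsum : (1/δ) * (Real.log (Real.log M) - Real.log (Real.log K0))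
      ≤ ∑ k ∈ Finset.Icc K0 M, 1/(δ*k*Real.log k) := by
    have heq : ∀ k ∈ Finset.Icc K0 M,
        1/(δ*(k:ℝ)*Real.log k) = (1/δ)*(1/((k:ℝ)*Real.log k)) := by
      intro k hk
      rw [div_mul_div_comm, one_mul, mul_assoc]
    rw [Finset.sum_congr rfl heq, ← Finset.mul_sum]
    have h := sum_inv_klogk_ge K0 hK02 M hM
    have hm2 : (2:ℝ) ≤ (M:ℝ) := by exact_mod_cast le_trans hK02 hM
    have hlogM : 0 < Real.log (M:ℝ) := Real.log_pos (by linarith)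
    have hmono : Real.log (M:ℝ) ≤ Real.log ((M:ℝ)+1) :=
      Real.log_le_log (by linarith) (by linarith)
    have hmono2 : Real.log (Real.log (M:ℝ)) ≤ Real.log (Real.log ((M:ℝ)+1)) :=
      Real.log_le_log hlogM hmono
    apply mul_le_mul_of_nonneg_left _ (one_div_pos.2 hδ).le
    linarith
  calc LamQ δ K0 M ≤ Real.exp (-∑ k ∈ Finset.Icc K0 M, 1/(δ*k*Real.log k)) := hstep1
    _ ≤ Real.exp ((1/δ) * Real.log (Real.log K0) - (1/δ) * Real.log (Real.log M)) := by
      apply Real.exp_le_exp.2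
      have : (1/δ) * (Real.log (Real.log M) - Real.log (Real.log K0))
          = (1/δ) * Real.log (Real.log M) - (1/δ) * Real.log (Real.log K0) := by ring
      linarith

end LamQ

set_option maxHeartbeats 2000000 in
lemma part2 (R : RenewalCovering μ) [IsProbabilityMeasure μ] {ε : ℝ} (hε : 0 < ε)
    {N : ℕ} (hN : 0 < N) :
    μ {ω | ∀ n, N < n → (R.P n ω : ℝ) < (1 - ε) * n * Real.log n} = 0 := by
  by_cases hε1 : 1 ≤ ε
  · have hempty : {ω : Ω | ∀ n, N < n → (R.P n ω : ℝ) < (1 - ε) * n * Real.log n} = ∅ := by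
      rw [Set.eq_empty_iff_forall_notMem]
      intro ω hω
      have h := hω (N+1) (by omega)
      have hcast : (1:ℝ) ≤ ((N+1:ℕ):ℝ) := by exact_mod_cast (by omega : 1 ≤ N+1)
      have hlog : 0 ≤ Real.log ((N+1:ℕ):ℝ) := Real.log_nonneg hcast
      have hrhs : (1 - ε) * ((N+1:ℕ):ℝ) * Real.log ((N+1:ℕ):ℝ) ≤ 0 := by
        have h1 : (1 - ε) * ((N+1:ℕ):ℝ) ≤ 0 :=
          mul_nonpos_of_nonpos_of_nonneg (by linarith) (by linarith)
        exact mul_nonpos_of_nonpos_of_nonneg h1 hlog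
      have hP : (0:ℝ) ≤ (R.P (N+1) ω : ℝ) := Nat.cast_nonneg _
      linarith
    rw [hempty]
    exact measure_empty
  push_neg at hε1
  set δ := 1 - ε with hδdef
  have hδpos : 0 < δ := by rw [hδdef]; linarith
  have hδ1 : δ < 1 := by rw [hδdef]; linarith
  set K0 := max (N+1) (max 3 (Nat.ceil (2/δ) + 1)) with hK0def
  have hK0N : N < K0 := by
    have := le_max_left (N+1) (max 3 (Nat.ceil (2/δ) + 1)); omega
  have hK03 : 3 ≤ K0 := by
    have h1 := le_max_right (N+1) (max 3 (Nat.ceil (2/δ) + 1))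
    have h2 := le_max_left 3 (Nat.ceil (2/δ) + 1)
    omega
  have hK02 : 2 ≤ K0 := by omega
  have hK0ceil : Nat.ceil (2/δ) ≤ K0 := by
    have h1 := le_max_right (N+1) (max 3 (Nat.ceil (2/δ) + 1))
    have h2 := le_max_right 3 (Nat.ceil (2/δ) + 1)
    omega
  have hK0prop : ∀ k : ℕ, K0 ≤ k → 2 ≤ δ*k*Real.log k := by
    intro k hk
    have hk3 : (3:ℝ) ≤ (k:ℝ) := by exact_mod_cast (by omega : 3 ≤ k)
    have hlogk : 1 ≤ Real.log (k:ℝ) := by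
      rw [Real.le_log_iff_exp_le (by linarith)]
      linarith [Real.exp_one_lt_d9]
    have hceil : (2/δ) ≤ (k:ℝ) := by
      calc (2/δ) ≤ (Nat.ceil (2/δ) : ℝ) := Nat.le_ceil _
        _ ≤ (k:ℝ) := by exact_mod_cast (by omega : Nat.ceil (2/δ) ≤ k)
    have h2 : 2 ≤ δ * (k:ℝ) := by
      rw [div_le_iff₀ hδpos] at hceil
      linarith [hceil]
    nlinarith
  set F := {ω : Ω | ∀ n, N < n → (R.P n ω : ℝ) < δ * n * Real.log n} with hF
  set q : ℕ → (ℕ → ℕ) → Prop :=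
    fun M a => ∀ n, N < n → n ≤ M → (a n : ℝ) < δ * n * Real.log n with hq
  have hqinv : ∀ M, ∀ a b : ℕ → ℕ, (∀ i, 1 ≤ i → i ≤ M → a i = b i) → q M a → q M b := by
    intro M a b hab hqa n hn1 hn2
    rw [← hab n (by omega) hn2]
    exact hqa n hn1 hn2
  have hFsub : ∀ M, 1 ≤ M → F ∩ Og R ⊆ U R M (q M) := by
    intro M hM
    rw [← inter_Og_eq_U R hM (q M) (hqinv M)]
    apply Set.inter_subset_inter_left
    intro ω hω n hn1 _
    exact hω n hn1
  have hUsub : ∀ M, 1 ≤ M → U R (M+1) (q (M+1)) ⊆ U R M (q M) := by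
    intro M hM
    rw [← inter_Og_eq_U R hM (q M) (hqinv M),
      ← inter_Og_eq_U R (by omega) (q (M+1)) (hqinv (M+1))]
    apply Set.inter_subset_inter_left
    intro ω hω n hn1 hn2
    exact hω n hn1 (by omega)
  have hlamle : ∀ M, K0 ≤ M → ∀ a ∈ S M, q M a → lamA M a ≤ LamQ δ K0 M :=
    fun M hM a ha hqa => lamA_le_LamQ hK0prop hK0N hK02 hM ha hqa
  set X : ℝ → ℕ → ENNReal := fun s n =>
    ∫⁻ ω in U R n (q n), ENNReal.ofReal (Real.exp (-(s * (R.P n ω : ℝ)))) ∂μ with hX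
  have hXone : ∀ s : ℝ, 0 ≤ s → ∀ n, X s n ≤ 1 := by
    intro s hs n
    rw [hX]
    dsimp only
    calc ∫⁻ ω in U R n (q n), ENNReal.ofReal (Real.exp (-(s * (R.P n ω : ℝ)))) ∂μ
        ≤ ∫⁻ _ω in U R n (q n), 1 ∂μ := by
          apply lintegral_mono
          intro ω
          rw [ENNReal.ofReal_le_one]
          calc Real.exp (-(s * (R.P n ω : ℝ))) ≤ Real.exp 0 := by
                apply Real.exp_le_exp.2
                have : (0:ℝ) ≤ s * (R.P n ω : ℝ) := mul_nonneg hs (Nat.cast_nonneg _)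
                linarith
            _ = 1 := Real.exp_zero
      _ = μ (U R n (q n)) := by rw [setLIntegral_const, one_mul]
      _ ≤ 1 := prob_le_one
  have hXstep : ∀ s : ℝ, 0 < s → ∀ n, K0 ≤ n →
      X s (n+1) ≤ ENNReal.ofReal (LamQ δ K0 n/(s + LamQ δ K0 n)) * X s n := by
    intro s hs n hn
    calc X s (n+1)
        ≤ ∫⁻ ω in U R n (q n), ENNReal.ofReal (Real.exp (-(s * (R.P (n+1) ω : ℝ)))) ∂μ :=
          lintegral_mono_set (hUsub n (by omega))
      _ ≤ _ := step_exp R (by omega) (q n) hs (LamQ_pos hK0prop n) (hlamle n hn)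
  have hXiter : ∀ s : ℝ, 0 < s → ∀ M, K0 ≤ M → ∀ j : ℕ,
      X s (M + j) ≤ ENNReal.ofReal (LamQ δ K0 M/(s + LamQ δ K0 M))^j * X s M := by
    intro s hs M hM j
    induction j with
    | zero => simp
    | succ j ih =>
      have hmono : LamQ δ K0 (M+j) ≤ LamQ δ K0 M := LamQ_anti hK0prop hM (by omega)
      have hρ : ENNReal.ofReal (LamQ δ K0 (M+j)/(s + LamQ δ K0 (M+j)))
          ≤ ENNReal.ofReal (LamQ δ K0 M/(s + LamQ δ K0 M)) := by
        apply ENNReal.ofReal_le_ofReal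
        have hp1 := LamQ_pos hK0prop (M+j)
        have hp2 := LamQ_pos hK0prop M
        rw [div_le_div_iff₀ (by linarith) (by linarith)]
        nlinarith
      calc X s (M+(j+1)) = X s ((M+j)+1) := rfl
        _ ≤ ENNReal.ofReal (LamQ δ K0 (M+j)/(s + LamQ δ K0 (M+j))) * X s (M+j) :=
          hXstep s hs (M+j) (by omega)
        _ ≤ ENNReal.ofReal (LamQ δ K0 M/(s + LamQ δ K0 M))
            * (ENNReal.ofReal (LamQ δ K0 M/(s + LamQ δ K0 M))^j * X s M) :=
          mul_le_mul' hρ ih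
        _ = ENNReal.ofReal (LamQ δ K0 M/(s + LamQ δ K0 M))^(j+1) * X s M := by
          rw [← mul_assoc, ← pow_succ']
  have hlow : ∀ s : ℝ, 0 ≤ s → ∀ M, K0 ≤ M →
      ENNReal.ofReal (Real.exp (-(s * (δ*M*Real.log M)))) * μ (U R M (q M)) ≤ X s M := by
    intro s hs M hM
    rw [hX]
    dsimp only
    rw [lintegral_U, measure_U, ← ENNReal.tsum_mul_left]
    apply ENNReal.tsum_le_tsum
    intro a
    rw [atom_lintegral_now R (by omega : 1 ≤ M)
      (fun m => ENNReal.ofReal (Real.exp (-(s * (m:ℝ)))))]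
    apply mul_le_mul_left
    apply ENNReal.ofReal_le_ofReal
    apply Real.exp_le_exp.2
    have hqa := a.2.2 M (by omega : N < M) le_rfl
    have := mul_le_mul_of_nonneg_left (le_of_lt hqa) hs
    linarith
  set c4 := (1/δ) * Real.log (Real.log K0) with hc4
  set β := 1/δ - 1 with hβ
  have hβpos : 0 < β := by
    rw [hβ]
    have h1 : 1 < 1/δ := by rw [lt_div_iff₀ hδpos]; linarith
    linarith
  have hfinal : ∀ M, K0 ≤ M → μ (F ∩ Og R) ≤
      ENNReal.ofReal (Real.exp ((M:ℝ)*(4 + c4 - β*Real.log (Real.log M)))) := by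
    intro M hM
    have hM3 : 3 ≤ M := le_trans hK03 hM
    have hMR : (3:ℝ) ≤ (M:ℝ) := by exact_mod_cast hM3
    have hlogM1 : 1 ≤ Real.log (M:ℝ) := by
      rw [Real.le_log_iff_exp_le (by linarith)]
      linarith [Real.exp_one_lt_d9]
    have hlogMpos : 0 < Real.log (M:ℝ) := by linarith
    set s := 1/Real.log (M:ℝ) with hs
    have hspos : 0 < s := by rw [hs]; positivity
    have hmono_μ : μ (F ∩ Og R) ≤ μ (U R (M+M) (q (M+M))) :=
      measure_mono (hFsub (M+M) (by omega))
    set B := δ*((M+M:ℕ):ℝ)*Real.log ((M+M:ℕ):ℝ) with hB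
    have hUle : μ (U R (M+M) (q (M+M))) ≤ X s (M+M) * ENNReal.ofReal (Real.exp (s*B)) := by
      have h1 := hlow s hspos.le (M+M) (by omega)
      have he : ENNReal.ofReal (Real.exp (-(s*B))) * ENNReal.ofReal (Real.exp (s*B)) = 1 := by
        rw [← ENNReal.ofReal_mul (Real.exp_pos _).le, ← Real.exp_add]
        norm_num
      calc μ (U R (M+M) (q (M+M))) = μ (U R (M+M) (q (M+M))) * 1 := (mul_one _).symm
        _ = (ENNReal.ofReal (Real.exp (-(s*B))) * μ (U R (M+M) (q (M+M))))
            * ENNReal.ofReal (Real.exp (s*B)) := by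
          rw [← he]; ring
        _ ≤ X s (M+M) * ENNReal.ofReal (Real.exp (s*B)) := mul_le_mul_left h1 _
    have hρnn : 0 ≤ LamQ δ K0 M/(s + LamQ δ K0 M) :=
      le_of_lt (div_pos (LamQ_pos hK0prop M)
        (by linarith [LamQ_pos hK0prop M]))
    have hXbound : X s (M+M) ≤ ENNReal.ofReal ((LamQ δ K0 M/(s + LamQ δ K0 M))^M) := by
      calc X s (M+M)
          ≤ ENNReal.ofReal (LamQ δ K0 M/(s + LamQ δ K0 M))^M * X s M := hXiter s hspos M hM M
        _ ≤ ENNReal.ofReal (LamQ δ K0 M/(s + LamQ δ K0 M))^M * 1 :=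
          mul_le_mul_right (hXone s hspos.le M) _
        _ = ENNReal.ofReal ((LamQ δ K0 M/(s + LamQ δ K0 M))^M) := by
          rw [mul_one, ← ENNReal.ofReal_pow hρnn]
    have hLam := LamQ_le_exp (N := N) hK0prop hδpos hK02 hM
    have hρle : LamQ δ K0 M/(s + LamQ δ K0 M)
        ≤ Real.exp (c4 - β*Real.log (Real.log M)) := by
      have h1 : LamQ δ K0 M/(s + LamQ δ K0 M) ≤ LamQ δ K0 M/s :=
        div_le_div_of_nonneg_left (LamQ_pos hK0prop M).le hspos
          (by linarith [LamQ_pos hK0prop M])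
      have h2 : LamQ δ K0 M/s = LamQ δ K0 M * Real.log M := by
        rw [hs]
        field_simp
      have h3 : LamQ δ K0 M * Real.log M
          ≤ Real.exp ((1/δ)*Real.log (Real.log K0) - (1/δ)*Real.log (Real.log M))
            * Real.exp (Real.log (Real.log M)) := by
        apply mul_le_mul hLam (le_of_eq (Real.exp_log hlogMpos).symm) hlogMpos.le
          (Real.exp_pos _).le
      have h4 : Real.exp ((1/δ)*Real.log (Real.log K0) - (1/δ)*Real.log (Real.log M))
          * Real.exp (Real.log (Real.log M))
          = Real.exp (c4 - β*Real.log (Real.log M)) := by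
        rw [← Real.exp_add]
        congr 1
        rw [hc4, hβ]
        ring
      rw [h2] at h1
      rw [h4] at h3
      linarith
    have hpowle : (LamQ δ K0 M/(s + LamQ δ K0 M))^M
        ≤ Real.exp ((M:ℝ)*(c4 - β*Real.log (Real.log M))) := by
      calc (LamQ δ K0 M/(s + LamQ δ K0 M))^M
          ≤ (Real.exp (c4 - β*Real.log (Real.log M)))^M := pow_le_pow_left₀ hρnn hρle M
        _ = Real.exp ((M:ℝ)*(c4 - β*Real.log (Real.log M))) := (Real.exp_nat_mul _ M).symm
    have hsB : s*B ≤ 4*(M:ℝ) := by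
      rw [hs, hB]
      have hcast : ((M+M:ℕ):ℝ) = 2*(M:ℝ) := by push_cast; ring
      rw [hcast]
      have hlog2 : Real.log 2 < 1 := by
        have he : (2:ℝ) < Real.exp 1 := by linarith [Real.exp_one_gt_d9]
        calc Real.log 2 < Real.log (Real.exp 1) := Real.log_lt_log (by norm_num) he
          _ = 1 := Real.log_exp 1
      have hlog2M : Real.log (2*(M:ℝ)) ≤ 2*Real.log (M:ℝ) := by
        rw [Real.log_mul (by norm_num) (by linarith)]
        linarith
      have hlog2Mnn : 0 ≤ Real.log (2*(M:ℝ)) := Real.log_nonneg (by linarith)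
      have h1 : δ*(2*(M:ℝ))*Real.log (2*(M:ℝ)) ≤ 2*(M:ℝ)*(2*Real.log (M:ℝ)) := by
        have hA : δ*(2*(M:ℝ))*Real.log (2*(M:ℝ)) ≤ (2*(M:ℝ))*Real.log (2*(M:ℝ)) := by
          have hnn := mul_nonneg (by positivity : (0:ℝ) ≤ 2*(M:ℝ)) hlog2Mnn
          nlinarith
        have hB2 : (2*(M:ℝ))*Real.log (2*(M:ℝ)) ≤ 2*(M:ℝ)*(2*Real.log (M:ℝ)) :=
          mul_le_mul_of_nonneg_left hlog2M (by positivity)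
        linarith
      calc (1/Real.log (M:ℝ))*(δ*(2*(M:ℝ))*Real.log (2*(M:ℝ)))
          ≤ (1/Real.log (M:ℝ))*(2*(M:ℝ)*(2*Real.log (M:ℝ))) :=
            mul_le_mul_of_nonneg_left h1 (by positivity)
        _ = 4*(M:ℝ) := by field_simp; ring
    calc μ (F ∩ Og R) ≤ μ (U R (M+M) (q (M+M))) := hmono_μ
      _ ≤ X s (M+M) * ENNReal.ofReal (Real.exp (s*B)) := hUle
      _ ≤ ENNReal.ofReal ((LamQ δ K0 M/(s + LamQ δ K0 M))^M)
          * ENNReal.ofReal (Real.exp (s*B)) := mul_le_mul_left hXbound _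
      _ = ENNReal.ofReal ((LamQ δ K0 M/(s + LamQ δ K0 M))^M * Real.exp (s*B)) :=
        (ENNReal.ofReal_mul (pow_nonneg hρnn M)).symm
      _ ≤ ENNReal.ofReal (Real.exp ((M:ℝ)*(c4 - β*Real.log (Real.log M)))
          * Real.exp (4*(M:ℝ))) := by
        apply ENNReal.ofReal_le_ofReal
        exact mul_le_mul hpowle (Real.exp_le_exp.2 hsB) (Real.exp_pos _).le
          (Real.exp_pos _).le
      _ = ENNReal.ofReal (Real.exp ((M:ℝ)*(4 + c4 - β*Real.log (Real.log M)))) := by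
        rw [← Real.exp_add]
        congr 2
        ring
  have h1 : Tendsto (fun M : ℕ => Real.log (Real.log (M:ℝ))) atTop atTop :=
    (Real.tendsto_log_atTop.comp Real.tendsto_log_atTop).comp tendsto_natCast_atTop_atTop
  have hev : ∀ᶠ M : ℕ in atTop, (M:ℝ)*(4 + c4 - β*Real.log (Real.log (M:ℝ))) ≤ -(M:ℝ) := by
    filter_upwards [h1.eventually_ge_atTop ((5 + c4)/β), eventually_ge_atTop 1] with M hM hM1
    have hβM : 5 + c4 ≤ β*Real.log (Real.log (M:ℝ)) := by
      rw [div_le_iff₀ hβpos] at hM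
      linarith
    have hMnn : (0:ℝ) ≤ (M:ℝ) := Nat.cast_nonneg _
    nlinarith
  have h2 : Tendsto (fun M : ℕ => (M:ℝ)*(4 + c4 - β*Real.log (Real.log (M:ℝ)))) atTop atBot := by
    apply tendsto_atBot_mono' atTop hev
    exact tendsto_neg_atTop_atBot.comp tendsto_natCast_atTop_atTop
  have hten : Tendsto (fun M : ℕ =>
      ENNReal.ofReal (Real.exp ((M:ℝ)*(4 + c4 - β*Real.log (Real.log (M:ℝ))))))
      atTop (𝓝 0) := by
    have h3 := Real.tendsto_exp_atBot.comp h2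
    have h4 := ENNReal.tendsto_ofReal h3
    simpa using h4
  have hle0 : μ (F ∩ Og R) ≤ 0 := by
    apply ge_of_tendsto hten
    filter_upwards [eventually_ge_atTop K0] with M hM
    exact hfinal M hM
  rw [← measure_inter_conull (compl_Og_null R)]
  exact le_antisymm hle0 zero_le

end RC17

/-- For the renewal covering, for every `ε > 0` and integer `N > 0`:
`P(P_n > (1+ε) n ln n for all n > N) = 0` and
`P(P_n < (1−ε) n ln n for all n > N) = 0`. -/
theorem stmt17 {Ω : Type*} [MeasurableSpace Ω] (μ : Measure Ω) [IsProbabilityMeasure μ]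
    (R : RenewalCovering μ) :
    ∀ ε : ℝ, 0 < ε → ∀ N : ℕ, 0 < N →
      μ {ω | ∀ n, N < n → (1 + ε) * n * Real.log n < (R.P n ω : ℝ)} = 0 ∧
      μ {ω | ∀ n, N < n → (R.P n ω : ℝ) < (1 - ε) * n * Real.log n} = 0 := by
  intro ε hε N hN
  exact ⟨RC17.part1 R hε hN, RC17.part2 R hε hN⟩
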